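/- Let $f : \mathbb{F}_2^n \to \{-1,1\}$ be computed by a complete binary decision tree of depth $d$ with distinct variables at all $n = 2^d - 1$ internal nodes, where the leaf reached by setting the last-queried variable to $b$ has label $(-1)^{1-b}$ (i.e., $-1$ for $b=0$ and $1$ for $b=1$). Then the Fourier support of $f$ is $\mathrm{supp}(\hat f) = \bigcup_{i \in [2^d]} \{ s \subseteq P_i : \N(i) \in s \}$, where $P_i$ is the set of internal nodes on the root-to-leaf path to leaf $i$ and $\N(i)$ is the internal node adjacent to leaf $i$, and subsets $s \subseteq [n]$ are identified with their characteristic vectors in $\mathbb{F}_2^n$. -/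

import Mathlib

/-!
Split the tree at its root `v`: `f = [x_v = 0] g₀ + [x_v = 1] g₁`, where the subtree functions
`g₀, g₁` do not read `x_v`. Writing `[x_v = b] = (1 ± (-1)^{x_v}) / 2` gives
`f̂(α) = (ĝ₀(α') ± ĝ₁(α')) / 2`, with `α'` the set `α` without `v`. By induction on the depth,
`ĝ_b(α') ≠ 0` exactly when `α'` lies on the path to a leaf of subtree `b` and contains the parent
of that leaf. The deepest node of `α'` determines the subtree, so at most one of the two terms is
nonzero and no cancellation can occur. At depth one, `f = -(-1)^{x_v}`.
-/

/-- One step down the complete binary decision tree (nodes numbered `0, 1, 2, …`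
in heap order, root `0`, children of `v` are `2v+1` and `2v+2`). -/
def treeStep {n : ℕ} (x : Fin n → ZMod 2) (v : ℕ) : ℕ :=
  2 * v + 1 + (if h : v < n then (x ⟨v, h⟩).val else 0)

/-- The leaf reached on input `x` by the complete binary decision tree of depth `d`. -/
def leafOf (d : ℕ) {n : ℕ} (x : Fin n → ZMod 2) : ℕ := (treeStep x)^[d] 0

/-- Leaf `2v+1+b` has label `(-1)^{1-b}`: `-1` for `b = 0` (odd `L`), `1` for `b = 1`. -/
def signL (L : ℕ) : ℝ := if L % 2 = 0 then 1 else -1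

/-- The function computed by the complete binary decision tree of depth `d`. -/
def treeFun (d : ℕ) (x : Fin (2 ^ d - 1) → ZMod 2) : ℝ := signL (leafOf d x)

/-- Parent of a node in heap numbering. -/
def parentN (v : ℕ) : ℕ := (v - 1) / 2

/-- The standard bilinear form on `𝔽₂ⁿ`. -/
def ip {n : ℕ} (x y : Fin n → ZMod 2) : ZMod 2 := ∑ i, x i * y i

/-- Fourier coefficient `f̂(α) = 𝔼ₓ[f(x)(-1)^⟨x,α⟩]`. -/
noncomputable def fhat {n : ℕ} (f : (Fin n → ZMod 2) → ℝ) (α : Fin n → ZMod 2) : ℝ :=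
  (∑ x : Fin n → ZMod 2, f x * (-1 : ℝ) ^ (ip x α).val) / 2 ^ n

/-- `α` (viewed as a subset of the internal nodes) is a subset of the path `P_L`
to some leaf `L` and contains the node `N(L) = parentN L` adjacent to `L`. -/
def inSupp (d : ℕ) (α : Fin (2 ^ d - 1) → ZMod 2) : Prop :=
  ∃ L : ℕ, 2 ^ d - 1 ≤ L ∧ L < 2 ^ (d + 1) - 1 ∧
    (∀ v : Fin (2 ^ d - 1), α v ≠ 0 →
        ∃ j, 1 ≤ j ∧ j ≤ d ∧ parentN^[j] L = (v : ℕ)) ∧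
    (∃ v : Fin (2 ^ d - 1), (v : ℕ) = parentN L ∧ α v ≠ 0)

lemma zmod_two_eq_zero_or_one (a : ZMod 2) : a = 0 ∨ a = 1 := by revert a; decide

lemma neg_one_pow_val_add (a b : ZMod 2) :
    (-1 : ℝ) ^ (a + b).val = (-1) ^ a.val * (-1) ^ b.val := by
  rw [ZMod.val_add, ← neg_one_pow_eq_pow_mod_two, pow_add]

lemma neg_one_pow_val_eq_one_iff (a : ZMod 2) : (-1 : ℝ) ^ a.val = 1 ↔ a = 0 := by
  rcases zmod_two_eq_zero_or_one a with rfl | rfl <;> norm_num [ZMod.val_one]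

lemma add_single_self_apply_self {ι : Type*} [DecidableEq ι] (α : ι → ZMod 2) (i : ι) :
    (α + Pi.single i (α i) : ι → ZMod 2) i = 0 := by
  simp [CharTwo.add_self_eq_zero]

lemma add_single_self_apply_of_ne {ι : Type*} [DecidableEq ι] (α : ι → ZMod 2) {i w : ι}
    (h : w ≠ i) : (α + Pi.single i (α i) : ι → ZMod 2) w = α w := by
  simp [h]

lemma add_mul_div_two_ne_zero_iff {a b s : ℝ} (hs : s ≠ 0) (hab : a = 0 ∨ b = 0) :
    (a + s * b) / 2 ≠ 0 ↔ a ≠ 0 ∨ b ≠ 0 := by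
  rcases hab with rfl | rfl <;> simp [hs]

section Walsh

variable {n : ℕ}

noncomputable def walsh (α x : Fin n → ZMod 2) : ℝ := (-1) ^ (ip x α).val

lemma ip_eq_dotProduct (x y : Fin n → ZMod 2) : ip x y = x ⬝ᵥ y := rfl

lemma walsh_add (α β x : Fin n → ZMod 2) : walsh (α + β) x = walsh α x * walsh β x := by
  simp only [walsh, ip_eq_dotProduct, dotProduct_add, neg_one_pow_val_add]

lemma walsh_add_apply (α x y : Fin n → ZMod 2) : walsh α (x + y) = walsh α x * walsh α y := by
  simp only [walsh, ip_eq_dotProduct, add_dotProduct, neg_one_pow_val_add]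

lemma walsh_single (i : Fin n) (a : ZMod 2) (x : Fin n → ZMod 2) :
    walsh (Pi.single i a) x = (-1) ^ (x i * a).val := by
  simp only [walsh, ip_eq_dotProduct, dotProduct_single]

lemma walsh_apply_single (α : Fin n → ZMod 2) (i : Fin n) :
    walsh α (Pi.single i 1) = (-1) ^ (α i).val := by
  simp only [walsh, ip_eq_dotProduct, single_dotProduct, one_mul]

end Walsh

section Sums

variable {n : ℕ}

lemma sum_walsh (α : Fin n → ZMod 2) :
    ∑ x, walsh α x = if α = 0 then 2 ^ n else 0 := by
  split_ifs with hα
  · simp [hα, walsh, ip, Finset.card_univ, ZMod.card]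
  obtain ⟨i, hi⟩ := Function.ne_iff.mp hα
  have hαi : α i = 1 := (zmod_two_eq_zero_or_one _).resolve_left hi
  have hneg : ∑ x, walsh α x = -∑ x, walsh α x := by
    rw [← Finset.sum_neg_distrib]
    refine Fintype.sum_equiv (Equiv.addRight (Pi.single i 1)) _ _ fun x => ?_
    simp [walsh_add_apply, walsh_apply_single, hαi, ZMod.val_one]
  linarith

/-- Flipping coordinate `i` exchanges the halves `x i = b` and `x i ≠ b` of the cube. -/
lemma sum_ite_eq_half {F : (Fin n → ZMod 2) → ℝ} {i : Fin n}
    (hF : ∀ x, F (x + Pi.single i 1) = F x) (b : ZMod 2) :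
    ∑ x, (if x i = b then F x else 0) = (∑ x, F x) / 2 := by
  have hflip : ∑ x, (if x i = b then F x else 0) = ∑ x, (if x i = b then 0 else F x) := by
    refine Fintype.sum_equiv (Equiv.addRight (Pi.single i 1)) _ _ fun x => ?_
    have : x i = b ↔ ¬x i + 1 = b := by generalize x i = a; revert a b; decide
    simp [hF, this]
  have hsplit : ∑ x, F x = ∑ x, ((if x i = b then F x else 0) + (if x i = b then 0 else F x)) :=
    Finset.sum_congr rfl fun x _ => by split_ifs <;> simp
  rw [hsplit, Finset.sum_add_distrib, ← hflip]
  ring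

end Sums

section Tree

variable {n : ℕ}

def subtreeFun (k v : ℕ) (x : Fin n → ZMod 2) : ℝ := signL ((treeStep x)^[k] v)

lemma subtreeFun_zero (c : ℕ) : subtreeFun (n := n) 0 c = fun _ => signL c := rfl

lemma le_treeStep (x : Fin n → ZMod 2) (v : ℕ) : v ≤ treeStep x v := by
  unfold treeStep; omega

lemma iterate_treeStep_congr {x y : Fin n → ZMod 2} {u : ℕ}
    (hxy : ∀ i : Fin n, u ≤ i → x i = y i) (k : ℕ) :
    (treeStep x)^[k] u = (treeStep y)^[k] u := by
  induction k generalizing u with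
  | zero => rfl
  | succ k ih =>
    have hstep : treeStep x u = treeStep y u := by
      unfold treeStep
      split_ifs with hu
      · rw [hxy ⟨u, hu⟩ le_rfl]
      · rfl
    rw [Function.iterate_succ_apply, Function.iterate_succ_apply, hstep]
    exact ih fun i hi => hxy i ((le_treeStep y u).trans hi)

lemma subtreeFun_add_single {k u : ℕ} {i : Fin n} (hi : (i : ℕ) < u) (a : ZMod 2)
    (x : Fin n → ZMod 2) : subtreeFun k u (x + Pi.single i a) = subtreeFun k u x :=
  congrArg signL <| iterate_treeStep_congr (fun j hj => by
    have hji : j ≠ i := Fin.ne_of_gt (Fin.lt_def.mpr (by omega))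
    simp [hji]) k

lemma subtreeFun_succ {k v : ℕ} (hv : v < n) (x : Fin n → ZMod 2) :
    subtreeFun (k + 1) v x =
      if x ⟨v, hv⟩ = 0 then subtreeFun k (2 * v + 1) x else subtreeFun k (2 * v + 2) x := by
  have hstep : treeStep x v = 2 * v + 1 + (x ⟨v, hv⟩).val := by simp [treeStep, hv]
  rcases zmod_two_eq_zero_or_one (x ⟨v, hv⟩) with hx | hx <;>
    simp [subtreeFun, Function.iterate_succ_apply, hstep, hx, ZMod.val_one]

end Tree

section Fourier

variable {n : ℕ}

lemma fhat_eq_sum_walsh (f : (Fin n → ZMod 2) → ℝ) (α : Fin n → ZMod 2) :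
    fhat f α = (∑ x, f x * walsh α x) / 2 ^ n := rfl

lemma fhat_const (c : ℝ) (α : Fin n → ZMod 2) :
    fhat (fun _ => c) α = if α = 0 then c else 0 := by
  rw [fhat_eq_sum_walsh, ← Finset.mul_sum, sum_walsh]
  split_ifs <;> simp

/-- The subtree at `v` is `g₀` on `x v = 0` and `g₁` on `x v = 1`, where `g₀, g₁` ignore `x v`;
so only the coefficients at `α` with its `v`-entry cleared survive. -/
lemma fhat_subtreeFun_succ {k v : ℕ} (hv : v < n) (α : Fin n → ZMod 2) :
    fhat (subtreeFun (k + 1) v) α =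
      (fhat (subtreeFun k (2 * v + 1)) (α + Pi.single ⟨v, hv⟩ (α ⟨v, hv⟩)) +
        (-1) ^ (α ⟨v, hv⟩).val *
          fhat (subtreeFun k (2 * v + 2)) (α + Pi.single ⟨v, hv⟩ (α ⟨v, hv⟩))) / 2 := by
  set i : Fin n := ⟨v, hv⟩
  set β := α + Pi.single i (α i) with hβ
  have hβi : β i = 0 := add_single_self_apply_self α i
  have hwalsh : ∀ x, walsh α x = walsh β x * (-1) ^ (x i * α i).val := fun x => by
    rw [← walsh_single, ← walsh_add, hβ, add_assoc, ← Pi.single_add, CharTwo.add_self_eq_zero,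
      Pi.single_zero, add_zero]
  have hinv : ∀ c, v < c → ∀ x,
      subtreeFun k c (x + Pi.single i 1) * walsh β (x + Pi.single i 1) =
        subtreeFun k c x * walsh β x := fun c hc x => by
    rw [subtreeFun_add_single hc, walsh_add_apply, walsh_apply_single, hβi]
    simp
  have hpt : ∀ x, subtreeFun (k + 1) v x * walsh α x =
      (if x i = 0 then subtreeFun k (2 * v + 1) x * walsh β x else 0) +
        (-1) ^ (α i).val * (if x i = 1 then subtreeFun k (2 * v + 2) x * walsh β x else 0) := by
    intro x
    rcases zmod_two_eq_zero_or_one (x i) with hx | hx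
    · simp [subtreeFun_succ hv, hwalsh, hx, i]
    · simp only [subtreeFun_succ hv, hx, one_ne_zero, ↓reduceIte, hwalsh, one_mul, zero_add, i]
      ring
  rw [fhat_eq_sum_walsh, fhat_eq_sum_walsh, fhat_eq_sum_walsh,
    Finset.sum_congr rfl fun x _ => hpt x, Finset.sum_add_distrib, ← Finset.mul_sum,
    sum_ite_eq_half (hinv _ (by omega)),
    sum_ite_eq_half (hinv _ (by omega))]
  ring

end Fourier

lemma parentN_iterate (j L : ℕ) : parentN^[j] L = (L + 1) / 2 ^ j - 1 := by
  induction j with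
  | zero => simp
  | succ j ih =>
    rw [Function.iterate_succ_apply', ih, parentN, pow_succ, ← Nat.div_div_eq_div_mul]
    omega

/-- `α`, as a set of nodes, lies on the path from `v` to a leaf `m - 1` of the depth-`k` subtree
at `v` and contains the parent of that leaf. In the `1`-based heap numbering `m = L + 1` the
`j`-th ancestor of `m` is `m / 2 ^ j`. -/
def LeafPathSupport {n : ℕ} (k v : ℕ) (α : Fin n → ZMod 2) : Prop :=
  ∃ m, m / 2 ^ k = v + 1 ∧
    (∀ w : Fin n, α w ≠ 0 → ∃ j, 1 ≤ j ∧ j ≤ k ∧ m / 2 ^ j = w + 1) ∧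
    ∃ w : Fin n, α w ≠ 0 ∧ m / 2 = w + 1

lemma inSupp_iff_leafPathSupport (k : ℕ) (α : Fin (2 ^ (k + 1) - 1) → ZMod 2) :
    inSupp (k + 1) α ↔ LeafPathSupport (k + 1) 0 α := by
  have hpos : ∀ j, 0 < 2 ^ j := fun j => Nat.two_pow_pos j
  have hdouble : 2 ^ (k + 1 + 1) = 2 * 2 ^ (k + 1) := pow_succ' 2 (k + 1)
  have hleaf : ∀ m, m / 2 ^ (k + 1) = 0 + 1 ↔ 2 ^ (k + 1) ≤ m ∧ m < 2 ^ (k + 1 + 1) := fun m => by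
    rw [Nat.div_eq_iff (hpos _), hdouble]
    have := hpos (k + 1)
    generalize 2 ^ (k + 1) = N at *
    omega
  have hanc : ∀ m j, 2 ^ j ≤ m → 1 ≤ m / 2 ^ j := fun m j h =>
    (Nat.le_div_iff_mul_le (hpos j)).mpr (by simpa using h)
  constructor
  · rintro ⟨L, hL₁, hL₂, hpath, w, hw, hαw⟩
    have hm : 2 ^ (k + 1) ≤ L + 1 ∧ L + 1 < 2 ^ (k + 1 + 1) := by omega
    refine ⟨L + 1, (hleaf _).mpr hm, fun u hu => ?_, w, hαw, ?_⟩
    · obtain ⟨j, hj₁, hj₂, hju⟩ := hpath u hu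
      have := hanc (L + 1) j ((Nat.pow_le_pow_right two_pos hj₂).trans hm.1)
      exact ⟨j, hj₁, hj₂, by rw [parentN_iterate] at hju; omega⟩
    · have := hanc (L + 1) 1 ((Nat.pow_le_pow_right two_pos (by omega)).trans hm.1)
      have h1 := parentN_iterate 1 L
      simp only [Function.iterate_one, pow_one] at h1 this
      omega
  · rintro ⟨m, hm, hpath, w, hαw, hw⟩
    have hm' := (hleaf m).mp hm
    refine ⟨m - 1, by omega, by omega, fun u hu => ?_, w, ?_, hαw⟩
    · obtain ⟨j, hj₁, hj₂, hju⟩ := hpath u hu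
      exact ⟨j, hj₁, hj₂, by rw [parentN_iterate, Nat.sub_add_cancel (by omega)]; omega⟩
    · have h1 := parentN_iterate 1 (m - 1)
      simp only [Function.iterate_one, pow_one, Nat.sub_add_cancel (by omega : 1 ≤ m)] at h1
      omega

namespace LeafPathSupport

variable {n : ℕ} {k : ℕ} {β : Fin n → ZMod 2}

/-- The deepest node of the support lies `k` levels below `c'` and at most `k` levels below `c`. -/
lemma root_le {c c' : ℕ} (h : LeafPathSupport (k + 1) c β) (h' : LeafPathSupport (k + 1) c' β) :
    c' ≤ c := by
  obtain ⟨m, hm, hpath, -⟩ := h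
  obtain ⟨m', hm', -, w, hβw, hw⟩ := h'
  obtain ⟨j, hj₁, -, hjw⟩ := hpath w hβw
  have hdesc : c' + 1 = m / 2 ^ (j + k) := by
    rw [← hm', pow_succ', ← Nat.div_div_eq_div_mul, hw, ← hjw, Nat.div_div_eq_div_mul, pow_add]
  have : m / 2 ^ (j + k) ≤ m / 2 ^ (k + 1) :=
    Nat.div_le_div_left (Nat.pow_le_pow_right two_pos (by omega)) (Nat.two_pow_pos _)
  omega

lemma root_unique {c c' : ℕ} (h : LeafPathSupport (k + 1) c β)
    (h' : LeafPathSupport (k + 1) c' β) : c = c' :=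
  le_antisymm (h'.root_le h) (h.root_le h')

end LeafPathSupport

section Recursion

variable {n v : ℕ} (hv : v < n) {α β : Fin n → ZMod 2}

lemma leafPathSupport_one_iff (hβv : β ⟨v, hv⟩ = 0) (hβ : ∀ w, w ≠ ⟨v, hv⟩ → β w = α w) :
    LeafPathSupport 1 v α ↔ α ⟨v, hv⟩ ≠ 0 ∧ β = 0 := by
  constructor
  · rintro ⟨m, hm, hpath, w, hαw, hw⟩
    have hwv : w = ⟨v, hv⟩ := Fin.ext (by simp only [pow_one] at hm; simp only; omega)
    refine ⟨hwv ▸ hαw, funext fun u => ?_⟩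
    by_cases huv : u = ⟨v, hv⟩
    · rw [huv, hβv, Pi.zero_apply]
    rw [hβ u huv, Pi.zero_apply]
    by_contra hαu
    obtain ⟨j, hj₁, hj₂, hju⟩ := hpath u hαu
    obtain rfl : j = 1 := by omega
    exact huv (Fin.ext (by simp only [pow_one] at hm hju; simp only; omega))
  · rintro ⟨hαv, hβ0⟩
    refine ⟨2 * v + 2, by omega, fun u hαu => ⟨1, le_rfl, le_rfl, ?_⟩, ⟨v, hv⟩, hαv,
      by simp only; omega⟩
    have huv : u = ⟨v, hv⟩ := by
      by_contra huv
      exact hαu (by rw [← hβ u huv, hβ0, Pi.zero_apply])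
    simp only [huv, pow_one]
    omega

lemma leafPathSupport_succ_succ_iff (hβv : β ⟨v, hv⟩ = 0) (hβ : ∀ w, w ≠ ⟨v, hv⟩ → β w = α w)
    {k : ℕ} :
    LeafPathSupport (k + 2) v α ↔
      LeafPathSupport (k + 1) (2 * v + 1) β ∨ LeafPathSupport (k + 1) (2 * v + 2) β := by
  have hhalf : ∀ m, m / 2 ^ (k + 2) = m / 2 ^ (k + 1) / 2 := fun m => by
    rw [Nat.div_div_eq_div_mul, ← pow_succ]
  have hdeep : ∀ m, m / 2 ^ (k + 1) ≤ m / 2 := fun m =>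
    Nat.div_le_div_left (by simpa using Nat.pow_le_pow_right two_pos (by omega : 1 ≤ k + 1))
      two_pos
  suffices LeafPathSupport (k + 2) v α ↔
      ∃ c, (c + 1) / 2 = v + 1 ∧ LeafPathSupport (k + 1) c β by
    rw [this]
    constructor
    · rintro ⟨c, hc, hβc⟩
      obtain rfl | rfl : c = 2 * v + 1 ∨ c = 2 * v + 2 := by omega
      exacts [Or.inl hβc, Or.inr hβc]
    · rintro (hβc | hβc) <;> exact ⟨_, by omega, hβc⟩
  constructor
  · rintro ⟨m, hm, hpath, w, hαw, hw⟩
    have hwv : w ≠ ⟨v, hv⟩ := fun h => by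
      have := hdeep m
      rw [hhalf] at hm
      rw [h] at hw
      simp only at hw
      omega
    refine ⟨m / 2 ^ (k + 1) - 1, by rw [hhalf] at hm; omega, ⟨m, by rw [hhalf] at hm; omega,
      fun u hβu => ?_, w, by rwa [hβ w hwv], hw⟩⟩
    have huv : u ≠ ⟨v, hv⟩ := fun h => hβu (h ▸ hβv)
    obtain ⟨j, hj₁, hj₂, hju⟩ := hpath u (hβ u huv ▸ hβu)
    refine ⟨j, hj₁, ?_, hju⟩
    by_contra hj
    obtain rfl : j = k + 2 := by omega
    exact huv (Fin.ext (by simp only; omega))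
  · rintro ⟨c, hc, m, hm, hpath, w, hβw, hw⟩
    have hwv : w ≠ ⟨v, hv⟩ := fun h => hβw (h ▸ hβv)
    refine ⟨m, by rw [hhalf, hm, hc], fun u hαu => ?_, w, by rwa [← hβ w hwv], hw⟩
    by_cases huv : u = ⟨v, hv⟩
    · exact ⟨k + 2, by omega, le_rfl, by rw [hhalf, hm, hc, huv]⟩
    obtain ⟨j, hj₁, hj₂, hju⟩ := hpath u (by rwa [hβ u huv])
    exact ⟨j, hj₁, by omega, hju⟩

end Recursion

/-- `h` says that all internal nodes of the depth-`k + 1` subtree at `v` are coordinates: the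
deepest ones are `2 ^ k * (v + 1) - 1, …, 2 ^ k * (v + 2) - 2`. -/
theorem fhat_subtreeFun_ne_zero_iff {n k v : ℕ} (h : 2 ^ k * (v + 2) ≤ n + 1)
    (α : Fin n → ZMod 2) :
    fhat (subtreeFun (k + 1) v) α ≠ 0 ↔ LeafPathSupport (k + 1) v α := by
  induction k generalizing v α with
  | zero =>
    have hv : v < n := by omega
    rw [fhat_subtreeFun_succ hv]
    have hsign : signL (2 * v + 1) = -1 ∧ signL (2 * v + 2) = 1 := by
      constructor <;> simp [signL]
    rw [subtreeFun_zero, subtreeFun_zero, fhat_const, fhat_const, hsign.1, hsign.2,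
      leafPathSupport_one_iff hv (add_single_self_apply_self α _)
        fun _ => add_single_self_apply_of_ne α]
    split_ifs with hβ0
    · simp only [hβ0, and_true, mul_one, ne_eq, ← neg_one_pow_val_eq_one_iff]
      constructor <;> intro h₁ h₂ <;> apply h₁ <;> linarith
    · simp [hβ0]
  | succ k ih =>
    have hv : v < n := by nlinarith [Nat.one_le_two_pow (n := k + 1)]
    rw [fhat_subtreeFun_succ hv]
    set β := α + Pi.single ⟨v, hv⟩ (α ⟨v, hv⟩)
    have hchild : ∀ c ≤ 2 * v + 2, 2 ^ k * (c + 2) ≤ n + 1 := fun c hc =>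
      (Nat.mul_le_mul_left _ (by omega : c + 2 ≤ 2 * (v + 2))).trans
        (by rwa [pow_succ, mul_assoc] at h)
    have hdisj : fhat (subtreeFun (k + 1) (2 * v + 1)) β = 0 ∨
        fhat (subtreeFun (k + 1) (2 * v + 2)) β = 0 := by
      by_contra! hne
      have := ((ih (hchild _ (by omega)) β).mp hne.1).root_unique
        ((ih (hchild _ le_rfl) β).mp hne.2)
      omega
    rw [add_mul_div_two_ne_zero_iff (pow_ne_zero _ (by norm_num)) hdisj,
      ih (hchild _ (by omega)), ih (hchild _ le_rfl),
      leafPathSupport_succ_succ_iff hv (add_single_self_apply_self α _)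
        fun _ => add_single_self_apply_of_ne α]

theorem stmt15 (d : ℕ) (hd : 1 ≤ d) :
    ∀ α : Fin (2 ^ d - 1) → ZMod 2, fhat (treeFun d) α ≠ 0 ↔ inSupp d α := by
  obtain ⟨k, rfl⟩ := Nat.exists_eq_add_of_le' hd
  intro α
  have hbound : 2 ^ k * (0 + 2) ≤ 2 ^ (k + 1) - 1 + 1 := by
    rw [pow_succ]
    omega
  exact (fhat_subtreeFun_ne_zero_iff hbound α).trans (inSupp_iff_leafPathSupport k α).symm
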